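/- Let T be an odd positive integer, c an integer with c ≥ 0, α, ρ real with |α| < 1/2 and |ρ| ≤ (T−1)/(2T), γ real with 0 < γ ≤ T, β > 0 real, and set λ := √β·γ/√T. There is a constant C = C(c,T,α,β,γ,ρ) > 0 such that for every integer k ≥ 1 and every z ∈ ℂ with Re z > 0 and Re(1/z) ≥ k/2: |e^{βπ/(kz)}·𝓗_{c,T}(α,γ,ρ,k;z) − λ·∫_{−1}^{1} (λx+iρ)^c·e^{−πβ(x²−1)/(kz) + 2πλαx}/cosh(π(λx+iρ)) dx| ≤ C. -/

import Mathlib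

open Complex Real MeasureTheory

/-!
With `l = √β·γ/√T` we have `T l² = β γ²`, so the substitution `x = l t` turns
`e^{βπ/(kz)}·𝓗` into `l ∫_ℝ F`, where `F` is the integrand of the finite integral; the
difference to be bounded is therefore `l ∫_{|t|>1} F`. Since `|ρ| < 1/2`, `|cosh(π(lt+iρ))|` is
at least `cos(πρ) > 0`, and since `Re(1/(kz)) ≥ 1/2`, for `t² ≥ 1` we get
`|F t| ≤ e^{c|ρ|}/cos(πρ) · e^{πβ(1-t²)/2 + (c+2π|α|) l |t|}`, an integrable majorant that does
not depend on `k` and `z`.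
-/

/-- `𝓗_{c,T}(α,γ,ρ,k;z) = ∫_ℝ (x+iρ)^c·e^{−πTx²/(γ²kz)+2πxα}/cosh(π(x+iρ)) dx`. -/
noncomputable def mordellH' (T c : ℕ) (α γ ρ : ℝ) (k : ℕ) (z : ℂ) : ℂ :=
  ∫ x : ℝ, ((x : ℂ) + I * ρ) ^ c *
      Complex.exp (-(π : ℂ) * T * x ^ 2 / (γ ^ 2 * k * z) + 2 * π * x * α) /
    Complex.cosh (π * ((x : ℂ) + I * ρ))

lemma integrable_exp_mul_one_sub_sq_add_mul_abs {p : ℝ} (hp : 0 < p) (q : ℝ) :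
    Integrable fun t : ℝ => Real.exp (p * (1 - t ^ 2) + q * |t|) := by
  refine ((integrable_exp_neg_mul_sq (half_pos hp)).const_mul
    (Real.exp (p + q ^ 2 / (2 * p)))).mono' (by fun_prop) (Filter.Eventually.of_forall fun t => ?_)
  rw [Real.norm_of_nonneg (Real.exp_pos _).le, ← Real.exp_add, Real.exp_le_exp]
  have key : q * |t| ≤ p / 2 * |t| ^ 2 + q ^ 2 / (2 * p) := by
    rw [div_mul_eq_mul_div, div_add_div _ _ two_ne_zero (by positivity),
      le_div_iff₀ (by positivity)]
    nlinarith [sq_nonneg (p * |t| - q)]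
  rw [sq_abs] at key
  linarith

lemma abs_cos_le_norm_cosh (a b : ℝ) : |Real.cos b| ≤ ‖Complex.cosh (a + b * I)‖ := by
  have hre : (Complex.cosh (a + b * I)).re = Real.cosh a * Real.cos b := by
    rw [Complex.cosh_add, Complex.cosh_mul_I, Complex.sinh_mul_I]
    simp [← ofReal_cosh, ← ofReal_sinh, ← ofReal_cos, ← ofReal_sin]
  calc |Real.cos b| ≤ Real.cosh a * |Real.cos b| :=
        le_mul_of_one_le_left (abs_nonneg _) (Real.one_le_cosh a)
    _ = |(Complex.cosh (a + b * I)).re| := by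
        rw [hre, abs_mul, abs_of_pos (Real.cosh_pos a)]
    _ ≤ _ := abs_re_le_norm _

lemma norm_pow_le_exp (u : ℂ) (c : ℕ) : ‖u ^ c‖ ≤ Real.exp (c * ‖u‖) := by
  rw [norm_pow, Real.exp_nat_mul]
  exact pow_le_pow_left₀ (norm_nonneg _)
    ((le_add_of_nonneg_right zero_le_one).trans (Real.add_one_le_exp _)) c

lemma norm_integral_sub_setIntegral_le {X E : Type*} [MeasurableSpace X] [NormedAddCommGroup E]
    [NormedSpace ℝ E] {μ : Measure X} {f : X → E} {g : X → ℝ} {s : Set X}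
    (hs : MeasurableSet s) (hf : Integrable f μ) (hg : Integrable g μ) (hg₀ : 0 ≤ g)
    (hfg : ∀ x ∉ s, ‖f x‖ ≤ g x) :
    ‖∫ x, f x ∂μ - ∫ x in s, f x ∂μ‖ ≤ ∫ x, g x ∂μ := by
  rw [← integral_add_compl hs hf, add_sub_cancel_left]
  calc ‖∫ x in sᶜ, f x ∂μ‖ ≤ ∫ x in sᶜ, g x ∂μ :=
        norm_integral_le_of_norm_le hg.integrableOn (ae_restrict_of_forall_mem hs.compl hfg)
    _ ≤ ∫ x, g x ∂μ := setIntegral_le_integral hg (Filter.Eventually.of_forall hg₀)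

/-- The integrand of `e^{βπ/w}·𝓗_{c,T}(α,γ,ρ,k;z)` after the substitution `x = l t`, where
`w = kz` and `l = √β·γ/√T`. -/
noncomputable def rescaledIntegrand (c : ℕ) (α ρ β l : ℝ) (w : ℂ) (t : ℝ) : ℂ :=
  ((l : ℂ) * t + I * ρ) ^ c *
      Complex.exp (-(π : ℂ) * β * ((t : ℂ) ^ 2 - 1) / w + 2 * π * l * α * t) /
    Complex.cosh (π * ((l : ℂ) * t + I * ρ))

lemma exp_mul_mordellH'_eq_integral {T c k : ℕ} {α γ ρ β l : ℝ} {z : ℂ} (hl : 0 < l)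
    (hγ : γ ≠ 0) (hTl : (T : ℝ) * l ^ 2 = β * γ ^ 2) (hkz : (k : ℂ) * z ≠ 0) :
    Complex.exp (β * π / (k * z)) * mordellH' T c α γ ρ k z =
      l * ∫ t, rescaledIntegrand c α ρ β l (k * z) t := by
  have hsubst := Measure.integral_comp_mul_left (fun x : ℝ => ((x : ℂ) + I * ρ) ^ c *
      Complex.exp (-(π : ℂ) * T * x ^ 2 / (γ ^ 2 * k * z) + 2 * π * x * α) /
    Complex.cosh (π * ((x : ℂ) + I * ρ))) l
  rw [abs_of_pos (inv_pos.mpr hl), eq_comm, inv_smul_eq_iff₀ hl.ne'] at hsubst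
  rw [mordellH', hsubst, Complex.real_smul, mul_left_comm, ← integral_const_mul]
  congr 1
  refine integral_congr_ae (Filter.Eventually.of_forall fun t => ?_)
  have hTlC : (T : ℂ) * (l : ℂ) ^ 2 = β * γ ^ 2 := by exact_mod_cast hTl
  have hγC : (γ : ℂ) ≠ 0 := by exact_mod_cast hγ
  have hexp : β * π / (k * z) + (-(π : ℂ) * T * ((l * t : ℝ) : ℂ) ^ 2 / (γ ^ 2 * k * z)
      + 2 * π * ((l * t : ℝ) : ℂ) * α) = -(π : ℂ) * β * ((t : ℂ) ^ 2 - 1) / (k * z)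
        + 2 * π * l * α * t := by
    have hquad :
        (T : ℂ) * ((l * t : ℝ) : ℂ) ^ 2 / (γ ^ 2 * k * z) = β * t ^ 2 / (k * z) := by
      rw [div_eq_div_iff (by rw [mul_assoc]; exact mul_ne_zero (pow_ne_zero 2 hγC) hkz) hkz]
      push_cast
      linear_combination ((t : ℂ) ^ 2 * (k * z)) * hTlC
    rw [show -(π : ℂ) * T * ((l * t : ℝ) : ℂ) ^ 2 / (γ ^ 2 * k * z) =
      -π * (T * ((l * t : ℝ) : ℂ) ^ 2 / (γ ^ 2 * k * z)) by ring, hquad]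
    push_cast
    ring
  rw [rescaledIntegrand, ← hexp, Complex.exp_add]
  push_cast
  ring

lemma cos_pi_mul_pos {ρ : ℝ} (hρ : |ρ| < 1 / 2) : 0 < Real.cos (π * ρ) := by
  obtain ⟨h₁, h₂⟩ := abs_lt.mp hρ
  apply Real.cos_pos_of_mem_Ioo
  constructor <;> nlinarith [Real.pi_pos]

lemma norm_rescaledIntegrand_le {c : ℕ} {α ρ β l : ℝ} (hl : 0 ≤ l) (hρ : |ρ| < 1 / 2)
    (w : ℂ) (t : ℝ) :
    ‖rescaledIntegrand c α ρ β l w t‖ ≤ Real.exp (c * |ρ|) / Real.cos (π * ρ) *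
      Real.exp (π * β * w⁻¹.re * (1 - t ^ 2) + (c + 2 * π * |α|) * l * |t|) := by
  have hcos := cos_pi_mul_pos hρ
  have hnum : ‖(l : ℂ) * t + I * ρ‖ ≤ l * |t| + |ρ| := by
    refine (norm_add_le _ _).trans_eq ?_
    simp [abs_of_nonneg hl]
  have hre : (-(π : ℂ) * β * ((t : ℂ) ^ 2 - 1) / w + 2 * π * l * α * t).re =
      π * β * w⁻¹.re * (1 - t ^ 2) + 2 * π * l * (α * t) := by
    have : -(π : ℂ) * β * ((t : ℂ) ^ 2 - 1) / w + 2 * π * l * α * t =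
        ((π * β * (1 - t ^ 2) : ℝ) : ℂ) * w⁻¹ + ((2 * π * l * (α * t) : ℝ) : ℂ) := by
      push_cast
      ring
    rw [this, add_re, re_ofReal_mul, ofReal_re]
    ring
  have hαt : α * t ≤ |α| * |t| := by rw [← abs_mul]; exact le_abs_self _
  have hden : Real.cos (π * ρ) ≤ ‖Complex.cosh (π * ((l : ℂ) * t + I * ρ))‖ := by
    have harg : (π : ℂ) * ((l : ℂ) * t + I * ρ) =
        ((π * (l * t) : ℝ) : ℂ) + ((π * ρ : ℝ) : ℂ) * I := by
      push_cast
      ring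
    rw [harg]
    exact (le_abs_self _).trans (abs_cos_le_norm_cosh _ _)
  rw [rescaledIntegrand, norm_div, norm_mul, Complex.norm_exp, hre, div_mul_eq_mul_div]
  refine div_le_div₀ (by positivity) ?_ hcos hden
  refine (mul_le_mul_of_nonneg_right (norm_pow_le_exp _ _) (Real.exp_pos _).le).trans ?_
  rw [← Real.exp_add, ← Real.exp_add, Real.exp_le_exp]
  have h₁ := mul_le_mul_of_nonneg_left hnum (Nat.cast_nonneg c)
  have h₂ := mul_le_mul_of_nonneg_left hαt (by positivity : 0 ≤ 2 * π * l)
  linarith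

lemma integrable_rescaledIntegrand {c : ℕ} {α ρ β l : ℝ} {w : ℂ} (hl : 0 ≤ l)
    (hρ : |ρ| < 1 / 2) (hβ : 0 < β) (hw : 0 < w⁻¹.re) :
    Integrable (rescaledIntegrand c α ρ β l w) := by
  refine ((integrable_exp_mul_one_sub_sq_add_mul_abs (by positivity : 0 < π * β * w⁻¹.re)
    ((c + 2 * π * |α|) * l)).const_mul (Real.exp (c * |ρ|) / Real.cos (π * ρ))).mono' ?_
    (Filter.Eventually.of_forall (norm_rescaledIntegrand_le hl hρ w))
  refine Measurable.aestronglyMeasurable ?_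
  unfold rescaledIntegrand
  fun_prop

lemma norm_rescaledIntegrand_le_of_one_le_sq {c : ℕ} {α ρ β l : ℝ} {w : ℂ} (hl : 0 ≤ l)
    (hρ : |ρ| < 1 / 2) (hβ : 0 ≤ β) (hw : 1 / 2 ≤ w⁻¹.re) {t : ℝ} (ht : 1 ≤ t ^ 2) :
    ‖rescaledIntegrand c α ρ β l w t‖ ≤ Real.exp (c * |ρ|) / Real.cos (π * ρ) *
      Real.exp (π * β / 2 * (1 - t ^ 2) + (c + 2 * π * |α|) * l * |t|) := by
  refine (norm_rescaledIntegrand_le hl hρ w t).trans ?_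
  have := (cos_pi_mul_pos hρ).le
  gcongr _ * Real.exp (?_ + _)
  nlinarith [mul_nonneg (mul_nonneg (by positivity : 0 ≤ π * β) (sub_nonneg.mpr ht))
    (sub_nonneg.mpr hw)]

lemma re_inv_natCast_mul (k : ℕ) (z : ℂ) : ((k : ℂ) * z)⁻¹.re = z⁻¹.re / k := by
  rw [mul_inv, ← ofReal_natCast, ← ofReal_inv, re_ofReal_mul, inv_mul_eq_div]

theorem H_split_general (T : ℕ) (hTpos : 0 < T)
    (c : ℕ) (α ρ : ℝ) (hρ : |ρ| ≤ ((T : ℝ) - 1) / (2 * T))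
    (γ : ℝ) (hγ : 0 < γ) (β : ℝ) (hβ : 0 < β) :
    ∃ C > 0, ∀ k : ℕ, 1 ≤ k → ∀ z : ℂ, 0 < z.re → (k : ℝ) / 2 ≤ (1 / z).re →
      ‖(Complex.exp (β * π / (k * z)) * mordellH' T c α γ ρ k z -
            (Real.sqrt β * γ / Real.sqrt T : ℝ) *
              ∫ x : ℝ in (-1 : ℝ)..1,
                (((Real.sqrt β * γ / Real.sqrt T : ℝ) : ℂ) * x + I * ρ) ^ c *
                    Complex.exp (-(π : ℂ) * β * ((x : ℂ) ^ 2 - 1) / (k * z) +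
                      2 * π * (Real.sqrt β * γ / Real.sqrt T : ℝ) * α * x) /
                  Complex.cosh (π *
                    (((Real.sqrt β * γ / Real.sqrt T : ℝ) : ℂ) * x + I * ρ)))‖ ≤ C := by
  have hT : (0 : ℝ) < T := by exact_mod_cast hTpos
  set l := Real.sqrt β * γ / Real.sqrt T with hl_def
  have hl : 0 < l := by positivity
  have hTl : (T : ℝ) * l ^ 2 = β * γ ^ 2 := by
    rw [hl_def, div_pow, mul_pow, Real.sq_sqrt hβ.le, Real.sq_sqrt hT.le]
    field_simp
  have hρ' : |ρ| < 1 / 2 :=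
    hρ.trans_lt (by rw [div_lt_div_iff₀ (by positivity) two_pos]; linarith)
  set G : ℝ → ℝ := fun t => Real.exp (c * |ρ|) / Real.cos (π * ρ) *
    Real.exp (π * β / 2 * (1 - t ^ 2) + (c + 2 * π * |α|) * l * |t|)
  have hG : Integrable G :=
    (integrable_exp_mul_one_sub_sq_add_mul_abs (by positivity) _).const_mul _
  have hG₀ : 0 ≤ G := fun t => by have := cos_pi_mul_pos hρ'; positivity
  refine ⟨l * (∫ t, G t) + 1, by have : 0 ≤ ∫ t, G t := integral_nonneg hG₀; positivity,
    fun k hk z hz hkz => ?_⟩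
  have hk' : (0 : ℝ) < k := by exact_mod_cast hk
  have hw : 1 / 2 ≤ ((k : ℂ) * z)⁻¹.re := by
    rw [re_inv_natCast_mul, le_div_iff₀ hk', ← one_div]
    linarith
  have htail : ∀ t ∉ Set.Ioc (-1 : ℝ) 1,
      ‖rescaledIntegrand c α ρ β l (k * z) t‖ ≤ G t := by
    intro t ht
    rw [Set.mem_Ioc, not_and_or, not_lt, not_le] at ht
    refine norm_rescaledIntegrand_le_of_one_le_sq hl.le hρ' hβ.le hw ?_
    rcases ht with h | h <;> nlinarith
  have hkz₀ : (k : ℂ) * z ≠ 0 :=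
    mul_ne_zero (by exact_mod_cast hk'.ne') (fun h => by simp [h] at hz)
  rw [exp_mul_mordellH'_eq_integral hl hγ.ne' hTl hkz₀,
    intervalIntegral.integral_of_le (by norm_num), ← mul_sub, norm_mul, norm_real,
    Real.norm_of_nonneg hl.le]
  calc l * ‖_‖ ≤ l * ∫ t, G t := mul_le_mul_of_nonneg_left
        (norm_integral_sub_setIntegral_le measurableSet_Ioc
          (integrable_rescaledIntegrand hl.le hρ' hβ (by linarith)) hG hG₀ htail) hl.le
    _ ≤ l * (∫ t, G t) + 1 := le_add_of_nonneg_right zero_le_one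

/-- Approximation of `e^{βπ/(kz)}·𝓗_{c,T}(α,γ,ρ,k;z)` by a finite integral, with a
uniformly bounded error. -/
theorem H_split (T : ℕ) (hT : Odd T) (hTpos : 0 < T)
    (c : ℕ) (α ρ : ℝ) (hα : |α| < 1 / 2) (hρ : |ρ| ≤ ((T : ℝ) - 1) / (2 * T))
    (γ : ℝ) (hγ : 0 < γ) (hγT : γ ≤ T) (β : ℝ) (hβ : 0 < β) :
    ∃ C > 0, ∀ k : ℕ, 1 ≤ k → ∀ z : ℂ, 0 < z.re → (k : ℝ) / 2 ≤ (1 / z).re →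
      ‖(Complex.exp (β * π / (k * z)) * mordellH' T c α γ ρ k z -
            (Real.sqrt β * γ / Real.sqrt T : ℝ) *
              ∫ x : ℝ in (-1 : ℝ)..1,
                (((Real.sqrt β * γ / Real.sqrt T : ℝ) : ℂ) * x + I * ρ) ^ c *
                    Complex.exp (-(π : ℂ) * β * ((x : ℂ) ^ 2 - 1) / (k * z) +
                      2 * π * (Real.sqrt β * γ / Real.sqrt T : ℝ) * α * x) /
                  Complex.cosh (π *
                    (((Real.sqrt β * γ / Real.sqrt T : ℝ) : ℂ) * x + I * ρ)))‖ ≤ C :=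
  H_split_general T hTpos c α ρ hρ γ hγ β hβ
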